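/- Let J be a 2×2 complex matrix with det J = 1 (an element of SL(2,ℂ)), and define the 4×4 matrix M by M_{ij} = (1/2) tr(σ_i J σ_j J†) for i, j ∈ {0,1,2,3}, where J† is the conjugate transpose. Then every entry M_{ij} is real, M satisfies the Lorentz condition MᵀGM = G, det M = 1, and M₀₀ > 0; that is, the Mueller–Jones matrix associated with a unit-determinant Jones matrix belongs to the proper orthochronous Lorentz group SO⁺(1,3). -/

import Mathlib

open Matrix

/-- The Minkowski metric matrix G = diag(1, -1, -1, -1). -/
noncomputable def G : Matrix (Fin 4) (Fin 4) ℝ := Matrix.diagonal ![1, -1, -1, -1]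

/-- The Pauli matrices σ₀, σ₁, σ₂, σ₃. -/
noncomputable def pauli : Fin 4 → Matrix (Fin 2) (Fin 2) ℂ :=
  ![!![1, 0; 0, 1], !![1, 0; 0, -1], !![0, 1; 1, 0], !![0, -Complex.I; Complex.I, 0]]

/-- The (complex-valued expression of the) Mueller–Jones matrix of a Jones matrix J:
M_{ij} = (1/2) tr(σ_i J σ_j J†). -/
noncomputable def muellerJonesC (J : Matrix (Fin 2) (Fin 2) ℂ) : Matrix (Fin 4) (Fin 4) ℂ :=
  Matrix.of fun i j => (1 / 2 : ℂ) * (pauli i * J * pauli j * Jᴴ).trace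

/-- The real Mueller–Jones matrix (real parts of the entries). -/
noncomputable def muellerJones (J : Matrix (Fin 2) (Fin 2) ℂ) : Matrix (Fin 4) (Fin 4) ℝ :=
  Matrix.of fun i j => (muellerJonesC J i j).re

/-! Every entry of `M` is a real quadratic form in the real and imaginary parts of the entries
of `J`, and in these coordinates `Mᵀ G M = |det J|² G` and `det M = |det J|⁴` are polynomial
identities valid for every `J`. They reflect that `M` is the matrix, in the Pauli basis, of the
map `X ↦ J X J†` on Hermitian matrices, which multiplies `det (∑ xᵢ σᵢ) = xᵀ G x` by `|det J|²`.
The entries are real because `σᵢ` are Hermitian and the trace is cyclic, and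
`M₀₀ ≥ Re (det J)` is a sum of squares. -/

theorem det_fin_four {R : Type*} [CommRing R] (A : Matrix (Fin 4) (Fin 4) R) :
    A.det =
      A 0 0 * (A 1 1 * A 2 2 * A 3 3 - A 1 1 * A 2 3 * A 3 2 - A 1 2 * A 2 1 * A 3 3
        + A 1 2 * A 2 3 * A 3 1 + A 1 3 * A 2 1 * A 3 2 - A 1 3 * A 2 2 * A 3 1)
      - A 0 1 * (A 1 0 * A 2 2 * A 3 3 - A 1 0 * A 2 3 * A 3 2 - A 1 2 * A 2 0 * A 3 3
        + A 1 2 * A 2 3 * A 3 0 + A 1 3 * A 2 0 * A 3 2 - A 1 3 * A 2 2 * A 3 0)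
      + A 0 2 * (A 1 0 * A 2 1 * A 3 3 - A 1 0 * A 2 3 * A 3 1 - A 1 1 * A 2 0 * A 3 3
        + A 1 1 * A 2 3 * A 3 0 + A 1 3 * A 2 0 * A 3 1 - A 1 3 * A 2 1 * A 3 0)
      - A 0 3 * (A 1 0 * A 2 1 * A 3 2 - A 1 0 * A 2 2 * A 3 1 - A 1 1 * A 2 0 * A 3 2
        + A 1 1 * A 2 2 * A 3 0 + A 1 2 * A 2 0 * A 3 1 - A 1 2 * A 2 1 * A 3 0) := by
  rw [det_succ_row_zero]
  simp [Fin.sum_univ_succ, det_fin_three, Fin.succAbove]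
  ring

theorem pauli_conjTranspose (i : Fin 4) : (pauli i)ᴴ = pauli i := by
  fin_cases i <;> ext j k <;> fin_cases j <;> fin_cases k <;> simp [pauli]

theorem muellerJonesC_im_eq_zero (J : Matrix (Fin 2) (Fin 2) ℂ) (i j : Fin 4) :
    (muellerJonesC J i j).im = 0 := by
  have h : star (pauli i * J * pauli j * Jᴴ).trace = (pauli i * J * pauli j * Jᴴ).trace := by
    rw [← trace_conjTranspose]
    simp only [conjTranspose_mul, conjTranspose_conjTranspose, pauli_conjTranspose,
      ← Matrix.mul_assoc]
    rw [trace_mul_comm, ← Matrix.mul_assoc, ← Matrix.mul_assoc]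
  simpa [muellerJonesC, ← Complex.conj_eq_iff_im] using h

theorem muellerJones_fin_two (a b c d : ℂ) :
    muellerJones !![a, b; c, d] =
      !![(a.re^2 + a.im^2 + b.re^2 + b.im^2 + c.re^2 + c.im^2 + d.re^2 + d.im^2) / 2,
          (a.re^2 + a.im^2 - b.re^2 - b.im^2 + c.re^2 + c.im^2 - d.re^2 - d.im^2) / 2,
          a.re * b.re + a.im * b.im + c.re * d.re + c.im * d.im,
          a.im * b.re - a.re * b.im + c.im * d.re - c.re * d.im;
        (a.re^2 + a.im^2 + b.re^2 + b.im^2 - c.re^2 - c.im^2 - d.re^2 - d.im^2) / 2,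
          (a.re^2 + a.im^2 - b.re^2 - b.im^2 - c.re^2 - c.im^2 + d.re^2 + d.im^2) / 2,
          a.re * b.re + a.im * b.im - c.re * d.re - c.im * d.im,
          a.im * b.re - a.re * b.im - c.im * d.re + c.re * d.im;
        a.re * c.re + a.im * c.im + b.re * d.re + b.im * d.im,
          a.re * c.re + a.im * c.im - b.re * d.re - b.im * d.im,
          a.re * d.re + a.im * d.im + b.re * c.re + b.im * c.im,
          a.im * d.re - a.re * d.im - b.im * c.re + b.re * c.im;
        a.re * c.im - a.im * c.re + b.re * d.im - b.im * d.re,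
          a.re * c.im - a.im * c.re - b.re * d.im + b.im * d.re,
          a.re * d.im - a.im * d.re + b.re * c.im - b.im * c.re,
          a.re * d.re + a.im * d.im - b.re * c.re - b.im * c.im] := by
  ext i j
  fin_cases i <;> fin_cases j <;>
    simp [muellerJones, muellerJonesC, pauli, trace, mul_apply, Fin.sum_univ_succ,
      conjTranspose_apply] <;> ring

theorem muellerJones_transpose_mul_G_mul (J : Matrix (Fin 2) (Fin 2) ℂ) :
    (muellerJones J)ᵀ * G * muellerJones J = Complex.normSq J.det • G := by
  rw [eta_fin_two J, muellerJones_fin_two, det_fin_two_of]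
  ext i j
  fin_cases i <;> fin_cases j <;>
    simp [G, mul_apply, Fin.sum_univ_four, Complex.normSq_apply] <;> ring

theorem det_muellerJones (J : Matrix (Fin 2) (Fin 2) ℂ) :
    (muellerJones J).det = Complex.normSq J.det ^ 2 := by
  rw [eta_fin_two J, muellerJones_fin_two, det_fin_two_of, det_fin_four]
  simp only [of_apply, cons_val', cons_val_zero, cons_val_one, cons_val, cons_val_fin_one,
    Complex.normSq_apply, Complex.sub_re, Complex.mul_re, Complex.sub_im, Complex.mul_im]
  ring

theorem re_det_le_muellerJones_zero_zero (J : Matrix (Fin 2) (Fin 2) ℂ) :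
    J.det.re ≤ muellerJones J 0 0 := by
  rw [eta_fin_two J, muellerJones_fin_two, det_fin_two_of]
  simp only [of_apply, cons_val', cons_val_zero, cons_val_fin_one,
    Complex.sub_re, Complex.mul_re]
  nlinarith [sq_nonneg ((J 0 0).re - (J 1 1).re), sq_nonneg ((J 0 0).im + (J 1 1).im),
    sq_nonneg ((J 0 1).re + (J 1 0).re), sq_nonneg ((J 0 1).im - (J 1 0).im)]

/-- The Mueller–Jones matrix of a unit-determinant Jones matrix has real entries and
belongs to the proper orthochronous Lorentz group SO⁺(1,3): MᵀGM = G, det M = 1, M₀₀ > 0. -/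
theorem muellerJones_mem_restricted_lorentz
    (J : Matrix (Fin 2) (Fin 2) ℂ) (hJ : J.det = 1) :
    (∀ i j : Fin 4, (muellerJonesC J i j).im = 0) ∧
    (muellerJones J)ᵀ * G * muellerJones J = G ∧
    (muellerJones J).det = 1 ∧
    0 < muellerJones J 0 0 := by
  refine ⟨muellerJonesC_im_eq_zero J, ?_, ?_, ?_⟩
  · rw [muellerJones_transpose_mul_G_mul, hJ, Complex.normSq_one, one_smul]
  · rw [det_muellerJones, hJ, Complex.normSq_one, one_pow]
  · have h := re_det_le_muellerJones_zero_zero J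
    rw [hJ, Complex.one_re] at h
    linarith
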